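/- Let x₁, x₂, x₃, x₄ ∈ ℝ³ and let G = (x₁ + x₂ + x₃ + x₄)/4. For each of the three ordered assignments (k, ℓ, r) ∈ {(2, 3, 4), (3, 4, 2), (4, 2, 3)}, set m = (x₁ + x_k)/2, L = (x₁ + x_ℓ + x_k)/3, R = (x₁ + x_r + x_k)/3, and define the dual-face directed-area vector n_{1k} := (1/2)(L − m) × (G − m) + (1/2)(G − m) × (R − m). Then (1/2)[(x₂ − x₁)·n₁₂ + (x₃ − x₁)·n₁₃ + (x₄ − x₁)·n₁₄] = (3/4)·(1/6)·det[x₂ − x₁, x₃ − x₁, x₄ − x₁]; that is, the edge-midpoint flux quadrature of the linear flux x over the dual faces at vertex x₁ equals three times one fourth of the signed volume of the tetrahedron, recovering 3·V₁ᴱ = 3·(1/4)·Vᴱ for a positively oriented tetrahedron. -/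
import Mathlib


/-- Cross product on `ℝ × ℝ × ℝ`. -/
noncomputable def cross (u v : ℝ × ℝ × ℝ) : ℝ × ℝ × ℝ :=
  (u.2.1 * v.2.2 - u.2.2 * v.2.1,
   u.2.2 * v.1 - u.1 * v.2.2,
   u.1 * v.2.1 - u.2.1 * v.1)

/-- Dot product on `ℝ × ℝ × ℝ`. -/
noncomputable def dot3 (u v : ℝ × ℝ × ℝ) : ℝ :=
  u.1 * v.1 + u.2.1 * v.2.1 + u.2.2 * v.2.2

/-- 3×3 determinant `det[u, v, w]` as the scalar triple product. -/
noncomputable def det3 (u v w : ℝ × ℝ × ℝ) : ℝ := dot3 u (cross v w)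

/-- Dual-face directed-area vector `n_{1k}` for the edge `{x₁, x_k}` of the tetrahedron
`(x₁, x₂, x₃, x₄)`, where `(x_k, x_ℓ, x_r)` is the ordered assignment of the other three
vertices: the sum of the directed areas of the two dual triangles `(m, L, G)` and
`(m, G, R)`. -/
noncomputable def dualDAV (x₁ xk xl xr G : ℝ × ℝ × ℝ) : ℝ × ℝ × ℝ :=
  let m := (1/2 : ℝ) • (x₁ + xk)
  let L := (1/3 : ℝ) • (x₁ + xl + xk)
  let R := (1/3 : ℝ) • (x₁ + xr + xk)
  (1/2 : ℝ) • cross (L - m) (G - m) + (1/2 : ℝ) • cross (G - m) (R - m)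

/-- The edge-midpoint flux quadrature of the linear flux `x` over the median dual faces at
the vertex `x₁` of the tetrahedron `(x₁, x₂, x₃, x₄)` equals three times one fourth of the
signed volume of the tetrahedron: `3·V₁ᴱ = 3·(1/4)·Vᴱ`. -/
theorem edge_quadrature_dual_volume_tet (x₁ x₂ x₃ x₄ : ℝ × ℝ × ℝ)
    (G : ℝ × ℝ × ℝ) (hG : G = (1/4 : ℝ) • (x₁ + x₂ + x₃ + x₄))
    (n₁₂ : ℝ × ℝ × ℝ) (hn₁₂ : n₁₂ = dualDAV x₁ x₂ x₃ x₄ G)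
    (n₁₃ : ℝ × ℝ × ℝ) (hn₁₃ : n₁₃ = dualDAV x₁ x₃ x₄ x₂ G)
    (n₁₄ : ℝ × ℝ × ℝ) (hn₁₄ : n₁₄ = dualDAV x₁ x₄ x₂ x₃ G) :
    (1/2 : ℝ) * (dot3 (x₂ - x₁) n₁₂ + dot3 (x₃ - x₁) n₁₃ + dot3 (x₄ - x₁) n₁₄)
      = (3/4 : ℝ) * ((1/6 : ℝ) * det3 (x₂ - x₁) (x₃ - x₁) (x₄ - x₁)) := by
  subst hG hn₁₂ hn₁₃ hn₁₄
  obtain ⟨a1, b1, c1⟩ := x₁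
  obtain ⟨a2, b2, c2⟩ := x₂
  obtain ⟨a3, b3, c3⟩ := x₃
  obtain ⟨a4, b4, c4⟩ := x₄
  simp only [dualDAV, cross, dot3, det3, Prod.mk_add_mk, Prod.smul_mk, Prod.mk_sub_mk,
    smul_eq_mul]
  ring
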